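/- arXiv:2604.01890 — 5 statements merged into one kernel-verified Lean document; each statement's English description precedes it below -/
import Mathlib

section
/- Let S be a real symmetric N×N matrix admitting an orthonormal eigenbasis ψ₁,…,ψ_N with corresponding eigenvalues 1 = λ₁ > λ₂ ≥ ⋯ ≥ λ_N > −1 (so 1 is a simple eigenvalue with unit eigenvector ψ₁, and all other eigenvalues lie in (−1,1)). Then the Moore–Penrose pseudoinverse of I − S² is given by the convergent series (I − S²)† = Σ_{i=0}^{∞} (S^{2i} − ψ₁ψ₁ᵀ). -/
/-!
In the eigenbasis, `S ^ m = ∑ λ_k ^ m ψ_k ψ_kᵀ`, so `I - S²` has coefficients `1 - λ_k²`, which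
vanish exactly for `k = 1`; the pseudoinverse inverts the nonzero ones. Expanded the same way, the
`k`-th coefficient of the series is the geometric series `∑ (λ_k²) ^ i = (1 - λ_k²)⁻¹` for `k ≠ 1`
and identically zero for `k = 1`.
-/

open Matrix

/-- `P` is the Moore–Penrose pseudoinverse of `M`. -/
def IsMoorePenrose {n : Type*} [Fintype n] [DecidableEq n]
    (M P : Matrix n n ℝ) : Prop :=
  M * P * M = M ∧ P * M * P = P ∧ (M * P)ᵀ = M * P ∧ (P * M)ᵀ = P * M

theorem IsMoorePenrose.unique {n : Type*} [Fintype n] [DecidableEq n] {M P Q : Matrix n n ℝ}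
    (hP : IsMoorePenrose M P) (hQ : IsMoorePenrose M Q) : P = Q := by
  obtain ⟨hP1, hP2, hP3, hP4⟩ := hP
  obtain ⟨hQ1, hQ2, hQ3, hQ4⟩ := hQ
  have hMP : M * P = M * Q :=
    calc M * P = (M * Q) * (M * P) := by
          rw [← Matrix.mul_assoc, Matrix.mul_assoc M Q M, ← Matrix.mul_assoc, hQ1]
      _ = (M * Q)ᵀ * (M * P)ᵀ := by rw [hQ3, hP3]
      _ = ((M * P * M) * Q)ᵀ := by rw [← transpose_mul, Matrix.mul_assoc (M * P) M Q]
      _ = M * Q := by rw [hP1, hQ3]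
  have hPM : P * M = Q * M :=
    calc P * M = (P * M) * (Q * M) := by
          rw [Matrix.mul_assoc, ← Matrix.mul_assoc M Q M, hQ1]
      _ = (P * M)ᵀ * (Q * M)ᵀ := by rw [hP4, hQ4]
      _ = (Q * (M * P * M))ᵀ := by
          rw [← transpose_mul, Matrix.mul_assoc Q M (P * M), Matrix.mul_assoc M P M]
      _ = Q * M := by rw [hP1, hQ4]
  calc P = P * M * P := hP2.symm
    _ = Q * M * Q := by rw [hPM, Matrix.mul_assoc, hMP, ← Matrix.mul_assoc]
    _ = Q := hQ2

section OrthogonalIdempotents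

variable {n ι : Type*} [Fintype n] [DecidableEq n] [Fintype ι] {P : ι → Matrix n n ℝ}

theorem sum_smul_mul_sum_smul (hidem : ∀ k, P k * P k = P k)
    (horth : Pairwise fun k l => P k * P l = 0) (a b : ι → ℝ) :
    (∑ k, a k • P k) * (∑ k, b k • P k) = ∑ k, (a k * b k) • P k := by
  rw [Finset.sum_mul_sum]
  refine Finset.sum_congr rfl fun k _ => ?_
  rw [Finset.sum_eq_single k (fun l _ hlk => by rw [smul_mul_smul_comm, horth hlk.symm, smul_zero])
    (by simp), smul_mul_smul_comm, hidem]

/-- The convention `0⁻¹ = 0` is exactly what the pseudoinverse does on the kernel. -/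
theorem isMoorePenrose_sum_smul (hidem : ∀ k, P k * P k = P k)
    (horth : Pairwise fun k l => P k * P l = 0) (hsymm : ∀ k, (P k)ᵀ = P k) (a : ι → ℝ) :
    IsMoorePenrose (∑ k, a k • P k) (∑ k, (a k)⁻¹ • P k) := by
  have hT (c : ι → ℝ) : (∑ k, c k • P k)ᵀ = ∑ k, c k • P k := by
    rw [transpose_sum]
    simp only [transpose_smul, hsymm]
  have hinv (c : ℝ) : c⁻¹ * c * c⁻¹ = c⁻¹ := by simpa using mul_inv_mul_cancel c⁻¹
  simp only [IsMoorePenrose, sum_smul_mul_sum_smul hidem horth, hT, mul_inv_mul_cancel, hinv,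
    and_self]

end OrthogonalIdempotents

section OrthonormalBasis

variable {n : Type*} [Fintype n] [DecidableEq n] {ψ : n → n → ℝ}

theorem vecMulVec_self_mul_self (horth : ∀ k l, ψ k ⬝ᵥ ψ l = if k = l then 1 else 0) (k : n) :
    vecMulVec (ψ k) (ψ k) * vecMulVec (ψ k) (ψ k) = vecMulVec (ψ k) (ψ k) := by
  simp [vecMulVec_mul_vecMulVec, horth]

theorem vecMulVec_self_mul_vecMulVec_self_of_ne
    (horth : ∀ k l, ψ k ⬝ᵥ ψ l = if k = l then 1 else 0) {k l : n} (hkl : k ≠ l) :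
    vecMulVec (ψ k) (ψ k) * vecMulVec (ψ l) (ψ l) = 0 := by
  simp [vecMulVec_mul_vecMulVec, horth, hkl]

/-- The rows of a square matrix are orthonormal iff its columns are. -/
theorem sum_vecMulVec_self_eq_one (horth : ∀ k l, ψ k ⬝ᵥ ψ l = if k = l then 1 else 0) :
    ∑ k, vecMulVec (ψ k) (ψ k) = 1 := by
  have hrows : of ψ * (of ψ)ᵀ = 1 := by
    ext k l
    simpa [mul_apply, one_apply, dotProduct] using horth k l
  have hcols : (of ψ)ᵀ * of ψ = 1 := mul_eq_one_comm.mp hrows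
  ext i j
  simpa [mul_apply, Matrix.sum_apply, vecMulVec_apply] using congrFun (congrFun hcols i) j

theorem pow_eq_sum_pow_smul_vecMulVec (horth : ∀ k l, ψ k ⬝ᵥ ψ l = if k = l then 1 else 0)
    {S : Matrix n n ℝ} {lam : n → ℝ} (heig : ∀ k, S *ᵥ ψ k = lam k • ψ k) (m : ℕ) :
    S ^ m = ∑ k, lam k ^ m • vecMulVec (ψ k) (ψ k) := by
  induction m with
  | zero => simp [sum_vecMulVec_self_eq_one horth]
  | succ m ih =>
    rw [pow_succ', ih]
    simp only [Finset.mul_sum, Matrix.mul_smul, mul_vecMulVec, heig, smul_vecMulVec, smul_smul,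
      ← pow_succ]

end OrthonormalBasis

/-- for a real symmetric matrix `S` with orthonormal eigenbasis
`ψ₁,…,ψ_N` and eigenvalues `1 = λ₁ > λ₂ ≥ ⋯ ≥ λ_N > −1`, the Moore–Penrose
pseudoinverse of `I − S²` equals the convergent series `Σ_{i=0}^∞ (S^{2i} − ψ₁ψ₁ᵀ)`. -/
theorem stmt0 (N : ℕ) (hN : 2 ≤ N) (S : Matrix (Fin N) (Fin N) ℝ)
    (ψ : Fin N → (Fin N → ℝ)) (lam : Fin N → ℝ)
    (heig : ∀ k, S.mulVec (ψ k) = lam k • ψ k)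
    (horth : ∀ k l, ψ k ⬝ᵥ ψ l = if k = l then 1 else 0)
    (hlam0 : lam ⟨0, by omega⟩ = 1)
    (hgap : ∀ k : Fin N, k ≠ ⟨0, by omega⟩ → lam k < 1)
    (hlow : ∀ k : Fin N, -1 < lam k)
    (Q : Matrix (Fin N) (Fin N) ℝ)
    (hQ : IsMoorePenrose (1 - S ^ 2) Q) :
    HasSum (fun i : ℕ => S ^ (2 * i) - vecMulVec (ψ ⟨0, by omega⟩) (ψ ⟨0, by omega⟩)) Q := by
  set z : Fin N := ⟨0, by omega⟩
  have hpow := pow_eq_sum_pow_smul_vecMulVec horth heig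
  have hQ_eq : Q = ∑ k, (1 - lam k ^ 2)⁻¹ • vecMulVec (ψ k) (ψ k) := by
    refine hQ.unique ?_
    have hM : 1 - S ^ 2 = ∑ k, (1 - lam k ^ 2) • vecMulVec (ψ k) (ψ k) := by
      simp only [sub_smul, one_smul, Finset.sum_sub_distrib, sum_vecMulVec_self_eq_one horth,
        hpow]
    rw [hM]
    exact isMoorePenrose_sum_smul (vecMulVec_self_mul_self horth)
      (fun _ _ => vecMulVec_self_mul_vecMulVec_self_of_ne horth)
      (fun _ => transpose_vecMulVec _ _) _
  have hterm (i : ℕ) : S ^ (2 * i) - vecMulVec (ψ z) (ψ z) =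
      ∑ k, ((lam k ^ 2) ^ i - if k = z then 1 else 0) • vecMulVec (ψ k) (ψ k) := by
    simp only [sub_smul, Finset.sum_sub_distrib, ite_smul, one_smul, zero_smul, Finset.sum_ite_eq',
      Finset.mem_univ, if_true, hpow, pow_mul]
  have hcoef (k : Fin N) :
      HasSum (fun i : ℕ => (lam k ^ 2) ^ i - if k = z then 1 else 0) (1 - lam k ^ 2)⁻¹ := by
    by_cases hk : k = z
    · simp [hk, hlam0, hasSum_zero]
    · have hsq : lam k ^ 2 < 1 :=
        (sq_lt_one_iff_abs_lt_one _).mpr (abs_lt.mpr ⟨hlow k, hgap k hk⟩)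
      simpa [hk] using hasSum_geometric_of_lt_one (sq_nonneg _) hsq
  rw [hQ_eq]
  simp only [hterm]
  exact hasSum_sum fun k _ => (hcoef k).smul_const _
end

section
/- Let N ≥ 2 and let x₁,…,x_N be nonnegative real numbers with x_i ∈ [0, Δ_i] for given Δ_i > 0, and set x = Σ_{i=1}^{N} x_i and Δ = (Σ_{i=1}^{N} Δ_i²)^{1/2}. Let β > N^{-1/2} (log N)^{1/2}, and set p = Δ N^{-1/2} (log(2N))^{1/2}/β, assuming 0 < p < 1. Let y₁,…,y_N be independent Bernoulli random variables each with success probability p, and define the estimator x̃ = (Σ_{i=1}^{N} x_i y_i)/p. Then ℙ( |x̃ − x| ≥ N^{1/2} β ) ≤ 1/N. -/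
/-!
Writing `S = ∑ i, (x i * y i - x i * p)`, the deviation `x̃ - x` equals `S / p`. Each summand is
`x i * y i ∈ [0, Δ i]` minus its mean, so by Hoeffding's lemma it is sub-Gaussian with parameter
`Δ i ^ 2 / 4`; by independence `S` is sub-Gaussian with parameter `Δ² / 4`, whence
`ℙ(|S| ≥ ε) ≤ 2 exp(-2 ε² / Δ²)`. The choice of `p` makes `ε = p √N β` equal to `Δ √(log 2N)`,
so the bound is `2 / (2N)² ≤ 1 / N`.
-/

open MeasureTheory ProbabilityTheory Real NNReal

namespace ProbabilityTheory

variable {Ω : Type*} [MeasurableSpace Ω] {μ : Measure Ω}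

lemma HasSubgaussianMGF.measureReal_abs_ge_le [IsFiniteMeasure μ] {X : Ω → ℝ} {c : ℝ≥0}
    (h : HasSubgaussianMGF X c μ) {ε : ℝ} (hε : 0 ≤ ε) :
    μ.real {ω | ε ≤ |X ω|} ≤ 2 * exp (-ε ^ 2 / (2 * c)) := by
  have hsplit : {ω | ε ≤ |X ω|} = {ω | ε ≤ X ω} ∪ {ω | ε ≤ (-X) ω} := by
    ext ω; simp [le_abs', le_neg, or_comm]
  calc μ.real {ω | ε ≤ |X ω|}
      ≤ μ.real {ω | ε ≤ X ω} + μ.real {ω | ε ≤ (-X) ω} := hsplit ▸ measureReal_union_le _ _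
    _ ≤ exp (-ε ^ 2 / (2 * c)) + exp (-ε ^ 2 / (2 * c)) :=
        add_le_add (h.measure_ge_le hε) (h.neg.measure_ge_le hε)
    _ = 2 * exp (-ε ^ 2 / (2 * c)) := by ring

lemma measureReal_abs_sum_ge_le_of_iIndepFun {ι : Type*} {X : ι → Ω → ℝ}
    (h_indep : iIndepFun X μ) {c : ι → ℝ≥0} {s : Finset ι}
    (h_subG : ∀ i ∈ s, HasSubgaussianMGF (X i) (c i) μ) {ε : ℝ} (hε : 0 ≤ ε) :
    μ.real {ω | ε ≤ |∑ i ∈ s, X i ω|} ≤ 2 * exp (-ε ^ 2 / (2 * ∑ i ∈ s, c i)) := by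
  have := h_indep.isProbabilityMeasure
  simpa using (HasSubgaussianMGF.sum_of_iIndepFun h_indep h_subG).measureReal_abs_ge_le hε

lemma integral_eq_measureReal_of_forall_eq_zero_or_eq_one {y : Ω → ℝ} (hy : Measurable y)
    (hval : ∀ ω, y ω = 0 ∨ y ω = 1) : ∫ ω, y ω ∂μ = μ.real {ω | y ω = 1} := by
  have hind : ∀ ω, y ω = (y ⁻¹' {1}).indicator 1 ω := fun ω ↦ by
    rcases hval ω with h | h <;> simp [h]
  rw [integral_congr_ae (ae_of_all μ hind), integral_indicator_one (hy (measurableSet_singleton 1))]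
  rfl

lemma hasSubgaussianMGF_const_mul_sub_of_bernoulli [IsProbabilityMeasure μ] {y : Ω → ℝ}
    (hy : Measurable y) (hval : ∀ ω, y ω = 0 ∨ y ω = 1) {p : ℝ} (hp : 0 ≤ p)
    (hbern : μ {ω | y ω = 1} = ENNReal.ofReal p) {a b : ℝ} (ha : a ∈ Set.Icc 0 b) :
    HasSubgaussianMGF (fun ω ↦ a * y ω - a * p) ((‖b‖₊ / 2) ^ 2) μ := by
  have hrange : ∀ ω, a * y ω ∈ Set.Icc 0 b := fun ω ↦ by
    rcases hval ω with h | h <;> simp [h, ha.1, ha.2, ha.1.trans ha.2]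
  have hmean : μ[fun ω ↦ a * y ω] = a * p := by
    rw [integral_const_mul, integral_eq_measureReal_of_forall_eq_zero_or_eq_one hy hval,
      measureReal_def, hbern, ENNReal.toReal_ofReal hp]
  simpa [hmean] using
    hasSubgaussianMGF_of_mem_Icc (hy.const_mul a).aemeasurable (ae_of_all μ hrange)

lemma measureReal_abs_sum_mul_sub_ge_le_of_bernoulli [IsProbabilityMeasure μ] {ι : Type*}
    [Fintype ι] {x Δ : ι → ℝ} (hx : ∀ i, x i ∈ Set.Icc 0 (Δ i)) {y : ι → Ω → ℝ}
    (hmeas : ∀ i, Measurable (y i)) (hindep : iIndepFun y μ)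
    (hval : ∀ i ω, y i ω = 0 ∨ y i ω = 1) {p : ℝ} (hp : 0 ≤ p)
    (hbern : ∀ i, μ {ω | y i ω = 1} = ENNReal.ofReal p) {ε : ℝ} (hε : 0 ≤ ε) :
    μ.real {ω | ε ≤ |∑ i, (x i * y i ω - x i * p)|} ≤
      2 * exp (-(2 * ε ^ 2 / ∑ i, Δ i ^ 2)) := by
  have hparam : ∑ i, (((‖Δ i‖₊ / 2) ^ 2 : ℝ≥0) : ℝ) = (∑ i, Δ i ^ 2) / 4 := by
    simp only [NNReal.coe_pow, NNReal.coe_div, coe_nnnorm, Real.norm_eq_abs, div_pow, sq_abs,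
      ← Finset.sum_div]
    norm_num
  have h := measureReal_abs_sum_ge_le_of_iIndepFun (s := Finset.univ)
    (hindep.comp (fun i v ↦ x i * v - x i * p) (fun i ↦ by fun_prop))
    (fun i _ ↦ hasSubgaussianMGF_const_mul_sub_of_bernoulli (hmeas i) (hval i) hp (hbern i) (hx i))
    hε
  rw [NNReal.coe_sum, hparam] at h
  exact h.trans_eq (by ring_nf)

lemma measureReal_abs_sum_mul_div_sub_ge_le_of_bernoulli [IsProbabilityMeasure μ] {ι : Type*}
    [Fintype ι] {x Δ : ι → ℝ} (hx : ∀ i, x i ∈ Set.Icc 0 (Δ i)) {y : ι → Ω → ℝ}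
    (hmeas : ∀ i, Measurable (y i)) (hindep : iIndepFun y μ)
    (hval : ∀ i ω, y i ω = 0 ∨ y i ω = 1) {p : ℝ} (hp : 0 < p)
    (hbern : ∀ i, μ {ω | y i ω = 1} = ENNReal.ofReal p) {ε : ℝ} (hε : 0 ≤ ε) :
    μ.real {ω | ε ≤ |(∑ i, x i * y i ω) / p - ∑ i, x i|} ≤
      2 * exp (-(2 * (p * ε) ^ 2 / ∑ i, Δ i ^ 2)) := by
  refine (measureReal_mono fun ω hω ↦ ?_).trans
    (measureReal_abs_sum_mul_sub_ge_le_of_bernoulli hx hmeas hindep hval hp.le hbern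
      (by positivity))
  have hsum : ∑ i, (x i * y i ω - x i * p) = p * ((∑ i, x i * y i ω) / p - ∑ i, x i) := by
    rw [Finset.sum_sub_distrib, ← Finset.sum_mul]
    field_simp
  rw [Set.mem_ofPred_eq, hsum, abs_mul, abs_of_pos hp]
  exact mul_le_mul_of_nonneg_left hω hp.le

end ProbabilityTheory

lemma two_mul_exp_neg_two_mul_log_two_mul_le_inv {n : ℝ} (hn : 1 ≤ n) :
    2 * exp (-(2 * log (2 * n))) ≤ n⁻¹ := by
  calc 2 * exp (-(2 * log (2 * n))) = 2 * (exp (log (2 * n)) ^ 2)⁻¹ := by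
        rw [Real.exp_neg, ← Real.exp_nat_mul]
        norm_num
    _ = (2 * n ^ 2)⁻¹ := by
        rw [Real.exp_log (by positivity)]
        field_simp
    _ ≤ n⁻¹ := inv_anti₀ (by positivity) (by nlinarith)

theorem stmt4_general {Ω : Type*} [MeasurableSpace Ω] (μ : Measure Ω)
    [IsProbabilityMeasure μ]
    (N : ℕ)
    (x Δ : Fin N → ℝ)
    (hx : ∀ i, x i ∈ Set.Icc 0 (Δ i))
    (β : ℝ)
    (p : ℝ)
    (hp : p = Real.sqrt (∑ i, (Δ i) ^ 2) * Real.sqrt (Real.log (2 * N)) /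
        (Real.sqrt N * β))
    (hp0 : 0 < p)
    (y : Fin N → Ω → ℝ) (hmeas : ∀ i, Measurable (y i))
    (hindep : iIndepFun y μ)
    (hval : ∀ i, ∀ ω, y i ω = 0 ∨ y i ω = 1)
    (hbern : ∀ i, μ {ω | y i ω = 1} = ENNReal.ofReal p) :
    μ {ω | Real.sqrt N * β ≤ |(∑ i, x i * y i ω) / p - ∑ i, x i|} ≤
      (N : ENNReal)⁻¹ := by
  set A := ∑ i, Δ i ^ 2
  set L := Real.log (2 * N)
  -- with the convention `a / 0 = 0`, `0 < p` forces every factor in the formula for `p` to be nonzero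
  obtain ⟨⟨hA, hL⟩, hN, hβ⟩ : (√A ≠ 0 ∧ √L ≠ 0) ∧ √(N : ℝ) ≠ 0 ∧ β ≠ 0 := by
    simpa [hp] using hp0.ne'
  rw [Real.sqrt_ne_zero'] at hA hL hN
  have hε : p * (√N * β) = √A * √L := by
    rw [hp, div_mul_cancel₀ _ (mul_ne_zero (Real.sqrt_ne_zero'.2 hN) hβ)]
  have hexponent : 2 * (p * (√N * β)) ^ 2 / A = 2 * L := by
    rw [hε, mul_pow, Real.sq_sqrt hA.le, Real.sq_sqrt hL.le]
    field_simp
  calc μ {ω | √N * β ≤ |(∑ i, x i * y i ω) / p - ∑ i, x i|}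
      = ENNReal.ofReal (μ.real {ω | √N * β ≤ |(∑ i, x i * y i ω) / p - ∑ i, x i|}) := by
        rw [ofReal_measureReal]
    _ ≤ ENNReal.ofReal (2 * exp (-(2 * L))) := by
        refine ENNReal.ofReal_le_ofReal ?_
        rw [← hexponent]
        exact measureReal_abs_sum_mul_div_sub_ge_le_of_bernoulli hx hmeas hindep hval hp0 hbern
          (nonneg_of_mul_nonneg_right (hε ▸ by positivity) hp0)
    _ ≤ ENNReal.ofReal (N : ℝ)⁻¹ := ENNReal.ofReal_le_ofReal
        (two_mul_exp_neg_two_mul_log_two_mul_le_inv (Nat.one_le_cast.2 (Nat.cast_pos.1 hN)))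
    _ = (N : ENNReal)⁻¹ := by
        rw [ENNReal.ofReal_inv_of_pos hN, ENNReal.ofReal_natCast]

/-- Bernoulli subsampling estimator for a sum of bounded
nonnegative numbers. If `x_i ∈ [0, Δ_i]`, `Δ = sqrt(Σ Δ_i²)`,
`β > N^{-1/2} (log N)^{1/2}`, `p = Δ N^{-1/2} (log(2N))^{1/2}/β ∈ (0,1)`, and
`y_1,…,y_N` are independent Bernoulli(p) random variables, then the estimator
`x̃ = (Σ x_i y_i)/p` satisfies `ℙ(|x̃ − x| ≥ √N · β) ≤ 1/N`. -/
theorem stmt4 {Ω : Type*} [MeasurableSpace Ω] (μ : Measure Ω)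
    [IsProbabilityMeasure μ]
    (N : ℕ) (hN : 2 ≤ N)
    (x Δ : Fin N → ℝ) (hΔpos : ∀ i, 0 < Δ i)
    (hx : ∀ i, x i ∈ Set.Icc 0 (Δ i))
    (β : ℝ) (hβ : Real.sqrt (Real.log N) / Real.sqrt N < β)
    (p : ℝ)
    (hp : p = Real.sqrt (∑ i, (Δ i) ^ 2) * Real.sqrt (Real.log (2 * N)) /
        (Real.sqrt N * β))
    (hp0 : 0 < p) (hp1 : p < 1)
    (y : Fin N → Ω → ℝ) (hmeas : ∀ i, Measurable (y i))
    (hindep : iIndepFun y μ)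
    (hval : ∀ i, ∀ ω, y i ω = 0 ∨ y i ω = 1)
    (hbern : ∀ i, μ {ω | y i ω = 1} = ENNReal.ofReal p) :
    μ {ω | Real.sqrt N * β ≤ |(∑ i, x i * y i ω) / p - ∑ i, x i|} ≤
      (N : ENNReal)⁻¹ :=
  stmt4_general μ N x Δ hx β p hp hp0 y hmeas hindep hval hbern
end

section
/- Let L be a real symmetric positive semidefinite N×N matrix satisfying L𝟏 = 𝟎 whose kernel is exactly the span of the all-ones vector 𝟏, and let D be a diagonal N×N matrix with positive diagonal entries d₁,…,d_N; set d_sum = Σ_i d_i, J = 𝟏𝟏ᵀ, and 𝓛 = D^{-1/2} L D^{-1/2}. Then the Moore–Penrose pseudoinverses satisfy 𝓛† = (I − (1/d_sum) D^{1/2} J D^{1/2}) D^{1/2} L† D^{1/2} (I − (1/d_sum) D^{1/2} J D^{1/2}). -/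
open Matrix

/-- Uniqueness of the Moore–Penrose pseudoinverse. -/
theorem mp_unique {n : Type*} [Fintype n] [DecidableEq n] {M P₁ P₂ : Matrix n n ℝ}
    (h1 : IsMoorePenrose M P₁) (h2 : IsMoorePenrose M P₂) : P₁ = P₂ := by
  obtain ⟨a1, b1, c1, d1⟩ := h1
  obtain ⟨a2, b2, c2, d2⟩ := h2
  have hMP : M * P₁ = M * P₂ := by
    calc M * P₁ = (M * P₁)ᵀ := c1.symm
    _ = ((M * P₂ * M) * P₁)ᵀ := by rw [a2]
    _ = ((M * P₂) * (M * P₁))ᵀ := by rw [Matrix.mul_assoc (M * P₂) M P₁]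
    _ = (M * P₁)ᵀ * (M * P₂)ᵀ := by rw [Matrix.transpose_mul]
    _ = (M * P₁) * (M * P₂) := by rw [c1, c2]
    _ = (M * P₁ * M) * P₂ := by rw [Matrix.mul_assoc (M * P₁) M P₂]
    _ = M * P₂ := by rw [a1]
  have hPM : P₁ * M = P₂ * M := by
    calc P₁ * M = (P₁ * M)ᵀ := d1.symm
    _ = (P₁ * ((M * P₂) * M))ᵀ := by rw [a2]
    _ = ((P₁ * (M * P₂)) * M)ᵀ := by rw [Matrix.mul_assoc P₁ (M * P₂) M]
    _ = (((P₁ * M) * P₂) * M)ᵀ := by rw [Matrix.mul_assoc P₁ M P₂]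
    _ = ((P₁ * M) * (P₂ * M))ᵀ := by rw [Matrix.mul_assoc (P₁ * M) P₂ M]
    _ = (P₂ * M)ᵀ * (P₁ * M)ᵀ := by rw [Matrix.transpose_mul]
    _ = (P₂ * M) * (P₁ * M) := by rw [d1, d2]
    _ = P₂ * ((M * P₁) * M) := by rw [Matrix.mul_assoc P₂ M (P₁ * M),
        Matrix.mul_assoc M P₁ M]
    _ = P₂ * M := by rw [a1]
  calc P₁ = P₁ * M * P₁ := b1.symm
  _ = P₂ * M * P₁ := by rw [hPM]
  _ = P₂ * (M * P₁) := by rw [Matrix.mul_assoc]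
  _ = P₂ * (M * P₂) := by rw [hMP]
  _ = P₂ * M * P₂ := by rw [Matrix.mul_assoc]
  _ = P₂ := b2

/-- for a Laplacian-like matrix `L` (symmetric PSD, `L𝟏 = 𝟎`,
kernel exactly the span of `𝟏`) and a positive diagonal matrix `D`, the
pseudoinverse of the normalized matrix `𝓛 = D^{-1/2} L D^{-1/2}` satisfies
`𝓛† = (I − (1/d_sum) D^{1/2} J D^{1/2}) D^{1/2} L† D^{1/2}
      (I − (1/d_sum) D^{1/2} J D^{1/2})`. -/
theorem stmt5 (N : ℕ) (hN : 2 ≤ N)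
    (L : Matrix (Fin N) (Fin N) ℝ) (hPSD : L.PosSemidef)
    (hker : ∀ v : Fin N → ℝ, L.mulVec v = 0 ↔ ∃ c : ℝ, v = fun _ => c)
    (hL1 : L.mulVec (fun _ => 1) = 0)
    (d : Fin N → ℝ) (hdpos : ∀ i, 0 < d i)
    (dsum : ℝ) (hdsum : dsum = ∑ i, d i)
    (Lp Np : Matrix (Fin N) (Fin N) ℝ)
    (hLp : IsMoorePenrose L Lp)
    (hNp : IsMoorePenrose
        (Matrix.diagonal (fun i => (Real.sqrt (d i))⁻¹) * L *
          Matrix.diagonal (fun i => (Real.sqrt (d i))⁻¹)) Np) :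
    Np =
      (1 - dsum⁻¹ •
          (Matrix.diagonal (fun i => Real.sqrt (d i)) * Matrix.of (fun _ _ => (1 : ℝ)) *
            Matrix.diagonal (fun i => Real.sqrt (d i)))) *
        (Matrix.diagonal (fun i => Real.sqrt (d i)) * Lp *
          Matrix.diagonal (fun i => Real.sqrt (d i))) *
      (1 - dsum⁻¹ •
          (Matrix.diagonal (fun i => Real.sqrt (d i)) * Matrix.of (fun _ _ => (1 : ℝ)) *
            Matrix.diagonal (fun i => Real.sqrt (d i)))) := by
  -- notation
  set S : Matrix (Fin N) (Fin N) ℝ := Matrix.diagonal (fun i => Real.sqrt (d i)) with hS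
  set Si : Matrix (Fin N) (Fin N) ℝ := Matrix.diagonal (fun i => (Real.sqrt (d i))⁻¹) with hSi
  set J : Matrix (Fin N) (Fin N) ℝ := Matrix.of (fun _ _ => (1 : ℝ)) with hJ
  set A : Matrix (Fin N) (Fin N) ℝ := Si * L * Si with hA
  set B : Matrix (Fin N) (Fin N) ℝ := S * Lp * S with hB
  set Q : Matrix (Fin N) (Fin N) ℝ := 1 - dsum⁻¹ • (S * J * S) with hQ
  -- basic facts
  have hsq : ∀ i, Real.sqrt (d i) ≠ 0 := fun i => (Real.sqrt_pos.mpr (hdpos i)).ne'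
  have hSSi : S * Si = 1 := by
    rw [hS, hSi, Matrix.diagonal_mul_diagonal]
    rw [show (fun i => Real.sqrt (d i) * (Real.sqrt (d i))⁻¹) = fun _ => (1:ℝ) from
      funext fun i => mul_inv_cancel₀ (hsq i), Matrix.diagonal_one]
  have hSiS : Si * S = 1 := by
    rw [hS, hSi, Matrix.diagonal_mul_diagonal]
    rw [show (fun i => (Real.sqrt (d i))⁻¹ * Real.sqrt (d i)) = fun _ => (1:ℝ) from
      funext fun i => inv_mul_cancel₀ (hsq i), Matrix.diagonal_one]
  have hdsum0 : dsum ≠ 0 := by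
    rw [hdsum]
    have hne : (Finset.univ : Finset (Fin N)).Nonempty := ⟨⟨0, by omega⟩, Finset.mem_univ _⟩
    exact (Finset.sum_pos (fun i _ => hdpos i) hne).ne'
  have hN0 : (N : ℝ) ≠ 0 := by positivity
  have hLsym : Lᵀ = L := hPSD.1
  have hLpsym : Lpᵀ = Lp := by
    refine mp_unique (M := L) ?_ hLp
    obtain ⟨a, b, c, e⟩ := hLp
    refine ⟨?_, ?_, ?_, ?_⟩
    · calc L * Lpᵀ * L = Lᵀ * Lpᵀ * Lᵀ := by rw [hLsym]
      _ = ((L * Lp * L))ᵀ := by simp [Matrix.transpose_mul, Matrix.mul_assoc]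
      _ = Lᵀ := by rw [a]
      _ = L := hLsym
    · calc Lpᵀ * L * Lpᵀ = Lpᵀ * Lᵀ * Lpᵀ := by rw [hLsym]
      _ = (Lp * L * Lp)ᵀ := by simp [Matrix.transpose_mul, Matrix.mul_assoc]
      _ = Lpᵀ := by rw [b]
    · have h1 : L * Lpᵀ = Lp * L := by
        conv_lhs => rw [← hLsym, ← Matrix.transpose_mul]
        rw [e]
      rw [h1]; exact e
    · have h2 : Lpᵀ * L = L * Lp := by
        conv_lhs => rw [← hLsym, ← Matrix.transpose_mul]
        rw [c]
      rw [h2]; exact c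
  have hLJ : L * J = 0 := by
    ext i j
    have := congrFun hL1 i
    simpa [hJ, Matrix.mul_apply, Matrix.mulVec, dotProduct] using this
  have hJL : J * L = 0 := by
    have hJt : Jᵀ = J := by ext i j; simp [hJ]
    calc J * L = Jᵀ * Lᵀᵀ := by rw [hJt, Matrix.transpose_transpose]
    _ = (Lᵀ * J)ᵀ := by rw [Matrix.transpose_mul, hJt]
    _ = (L * J)ᵀ := by rw [hLsym]
    _ = 0 := by rw [hLJ]; simp
  -- the key identity : L * Lp = 1 - N⁻¹ • J
  have hML : (1 - L * Lp) * L = 0 := by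
    rw [Matrix.sub_mul, Matrix.one_mul, hLp.1, sub_self]
  have hMsym : (1 - L * Lp)ᵀ = 1 - L * Lp := by
    rw [Matrix.transpose_sub, Matrix.transpose_one, hLp.2.2.1]
  have hLM : L * (1 - L * Lp) = 0 := by
    calc L * (1 - L * Lp) = ((1 - L * Lp)ᵀ * Lᵀ)ᵀ := by
          simp [Matrix.transpose_mul]
    _ = ((1 - L * Lp) * L)ᵀ := by rw [hMsym, hLsym]
    _ = 0 := by rw [hML]; simp
  have hcols : ∀ j, ∃ c : ℝ, (fun i => (1 - L * Lp) i j) = fun _ => c := by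
    intro j
    apply (hker _).mp
    ext k
    have := congrFun (congrFun hLM k) j
    simpa [Matrix.mul_apply, Matrix.mulVec, dotProduct] using this
  have hJM : J * (1 - L * Lp) = J := by
    rw [Matrix.mul_sub, Matrix.mul_one, ← Matrix.mul_assoc, hJL, Matrix.zero_mul, sub_zero]
  have hK : L * Lp = 1 - (N : ℝ)⁻¹ • J := by
    have h1 : (1 : Matrix (Fin N) (Fin N) ℝ) - L * Lp = (N : ℝ)⁻¹ • J := by
      ext i j
      obtain ⟨c, hc⟩ := hcols j
      have hij : (1 - L * Lp) i j = c := congrFun hc i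
      have hsum : (J * (1 - L * Lp)) i j = (J : Matrix (Fin N) (Fin N) ℝ) i j :=
        congrFun (congrFun hJM i) j
      have : (N : ℝ) * c = 1 := by
        have hl : (J * (1 - L * Lp)) i j = ∑ k, (1 - L * Lp) k j := by
          simp [hJ, Matrix.mul_apply]
        rw [hl] at hsum
        have : ∑ k, (1 - L * Lp) k j = (N : ℝ) * c := by
          rw [Finset.sum_congr rfl (fun k _ => congrFun hc k)]
          simp [mul_comm]
        rw [this] at hsum
        simpa [hJ] using hsum
      have hc' : c = (N : ℝ)⁻¹ := by
        field_simp
        linarith [this]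
      simp [hij, hc', hJ]
    calc L * Lp = 1 - (1 - L * Lp) := (sub_sub_cancel 1 (L * Lp)).symm
    _ = 1 - (N : ℝ)⁻¹ • J := by rw [h1]
  have hKL : Lp * L = L * Lp := by
    calc Lp * L = (Lp * L)ᵀ := hLp.2.2.2.symm
    _ = Lᵀ * Lpᵀ := by rw [Matrix.transpose_mul]
    _ = L * Lp := by rw [hLsym, hLpsym]
  -- J * S * S * J = dsum • J
  have hSS : S * S = Matrix.diagonal d := by
    rw [hS, Matrix.diagonal_mul_diagonal]
    exact congrArg Matrix.diagonal (funext fun i => Real.mul_self_sqrt (hdpos i).le)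
  have hJSSJ : J * (S * S) * J = dsum • J := by
    rw [hSS]
    ext i j
    simp [hJ, Matrix.mul_apply, Matrix.diagonal_apply, hdsum]
  -- A annihilates S*J*S on both sides
  have hASJS : A * (S * J * S) = 0 := by
    calc A * (S * J * S) = Si * L * (Si * S) * J * S := by
          simp only [hA, Matrix.mul_assoc]
    _ = Si * (L * J) * S := by rw [hSiS]; simp only [Matrix.mul_assoc, Matrix.mul_one, Matrix.one_mul]
    _ = 0 := by rw [hLJ]; simp
  have hSJSA : (S * J * S) * A = 0 := by
    calc (S * J * S) * A = S * J * (S * Si) * L * Si := by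
          simp only [hA, Matrix.mul_assoc]
    _ = S * (J * L) * Si := by rw [hSSi]; simp only [Matrix.mul_assoc, Matrix.mul_one, Matrix.one_mul]
    _ = 0 := by rw [hJL]; simp
  have hAQ : A * Q = A := by
    rw [hQ, Matrix.mul_sub, Matrix.mul_one, Matrix.mul_smul, hASJS, smul_zero, sub_zero]
  have hQA : Q * A = A := by
    rw [hQ, Matrix.sub_mul, Matrix.one_mul, Matrix.smul_mul, hSJSA, smul_zero, sub_zero]
  -- A*B and B*A
  have hAB : A * B = Si * (L * Lp) * S := by
    calc A * B = Si * L * (Si * S) * Lp * S := by simp only [hA, hB, Matrix.mul_assoc]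
    _ = Si * (L * Lp) * S := by rw [hSiS]; simp only [Matrix.mul_assoc, Matrix.mul_one, Matrix.one_mul]
  have hBA : B * A = S * (L * Lp) * Si := by
    calc B * A = S * Lp * (S * Si) * L * Si := by simp only [hA, hB, Matrix.mul_assoc]
    _ = S * (Lp * L) * Si := by rw [hSSi]; simp only [Matrix.mul_assoc, Matrix.mul_one, Matrix.one_mul]
    _ = S * (L * Lp) * Si := by rw [hKL]
  -- A*B*Q = Q
  have hABQ : A * B * Q = Q := by
    rw [hAB, hK]
    have e1 : Si * (1 - (N : ℝ)⁻¹ • J) * S = 1 - (N : ℝ)⁻¹ • (Si * J * S) := by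
      rw [Matrix.mul_sub, Matrix.mul_one, Matrix.mul_smul, Matrix.sub_mul,
        Matrix.smul_mul, hSiS]
    rw [e1, Matrix.sub_mul, Matrix.one_mul]
    have e2 : Si * J * S * Q = 0 := by
      rw [hQ, Matrix.mul_sub, Matrix.mul_one, Matrix.mul_smul]
      have e3 : Si * J * S * (S * J * S) = dsum • (Si * J * S) := by
        calc Si * J * S * (S * J * S) = Si * (J * (S * S) * J) * S := by
              simp only [Matrix.mul_assoc]
        _ = Si * (dsum • J) * S := by rw [hJSSJ]
        _ = dsum • (Si * J * S) := by rw [Matrix.mul_smul, Matrix.smul_mul]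
      rw [e3, smul_smul, inv_mul_cancel₀ hdsum0, one_smul, sub_self]
    rw [Matrix.smul_mul, e2, smul_zero, sub_zero]
  -- Q*B*A = Q
  have hQBA : Q * (B * A) = Q := by
    rw [hBA, hK]
    have e1 : S * (1 - (N : ℝ)⁻¹ • J) * Si = 1 - (N : ℝ)⁻¹ • (S * J * Si) := by
      rw [Matrix.mul_sub, Matrix.mul_one, Matrix.mul_smul, Matrix.sub_mul,
        Matrix.smul_mul, hSSi]
    rw [e1, Matrix.mul_sub, Matrix.mul_one]
    have e2 : Q * (S * J * Si) = 0 := by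
      rw [hQ, Matrix.sub_mul, Matrix.one_mul]
      have e3 : S * J * S * (S * J * Si) = dsum • (S * J * Si) := by
        calc S * J * S * (S * J * Si) = S * (J * (S * S) * J) * Si := by
              simp only [Matrix.mul_assoc]
        _ = S * (dsum • J) * Si := by rw [hJSSJ]
        _ = dsum • (S * J * Si) := by rw [Matrix.mul_smul, Matrix.smul_mul]
      rw [Matrix.smul_mul, e3, smul_smul, inv_mul_cancel₀ hdsum0, one_smul, sub_self]
    rw [Matrix.mul_smul, e2, smul_zero, sub_zero]
  -- Q is idempotent and symmetric
  have hQQ : Q * Q = Q := by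
    rw [hQ]
    have e3 : (S * J * S) * (S * J * S) = dsum • (S * J * S) := by
      calc (S * J * S) * (S * J * S) = S * (J * (S * S) * J) * S := by
            simp only [Matrix.mul_assoc]
      _ = S * (dsum • J) * S := by rw [hJSSJ]
      _ = dsum • (S * J * S) := by rw [Matrix.mul_smul, Matrix.smul_mul]
    have e4 : dsum⁻¹ • (S * J * S) * (dsum⁻¹ • (S * J * S)) = dsum⁻¹ • (S * J * S) := by
      rw [Matrix.smul_mul, Matrix.mul_smul, e3, smul_smul, smul_smul]
      congr 1
      field_simp
    rw [Matrix.sub_mul, Matrix.one_mul, Matrix.mul_sub, Matrix.mul_one, e4, sub_self, sub_zero]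
  have hQsym : Qᵀ = Q := by
    rw [hQ, Matrix.transpose_sub, Matrix.transpose_one, Matrix.transpose_smul,
      Matrix.transpose_mul, Matrix.transpose_mul]
    have hJt : Jᵀ = J := by ext i j; simp [hJ]
    rw [hJt, hS, Matrix.diagonal_transpose, Matrix.mul_assoc]
  -- the candidate satisfies Moore-Penrose for A
  have hP : IsMoorePenrose A (Q * B * Q) := by
    have hAP : A * (Q * B * Q) = Q := by
      calc A * (Q * B * Q) = (A * Q) * B * Q := by simp only [Matrix.mul_assoc]
      _ = A * B * Q := by rw [hAQ]
      _ = Q := hABQ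
    have hPA : (Q * B * Q) * A = Q := by
      calc (Q * B * Q) * A = Q * (B * (Q * A)) := by simp only [Matrix.mul_assoc]
      _ = Q * (B * A) := by rw [hQA]
      _ = Q := hQBA
    refine ⟨?_, ?_, ?_, ?_⟩
    · rw [hAP, hQA]
    · rw [Matrix.mul_assoc (Q * B * Q) A (Q * B * Q), hAP]
      calc Q * B * Q * Q = Q * B * (Q * Q) := by simp only [Matrix.mul_assoc]
      _ = Q * B * Q := by rw [hQQ]
    · rw [hAP, hQsym]
    · rw [hPA, hQsym]
  exact mp_unique hNp hP
end

section
/- Let L be a real symmetric positive semidefinite N×N matrix satisfying L𝟏 = 𝟎 whose kernel is exactly the span of the all-ones vector 𝟏, let D be a diagonal N×N matrix with positive diagonal entries d₁,…,d_N, set d_sum = Σ_i d_i, 𝓛 = D^{-1/2} L D^{-1/2}, and let π ∈ ℝ^N be the vector with π_i = d_i/d_sum. Then for every index i, the i-th diagonal entry of 𝓛† satisfies e_iᵀ 𝓛† e_i = d_i (e_i − π)ᵀ L† (e_i − π). -/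
/-!
Write `S = diag(√d)`, so that `𝓛 = S⁻¹ L S⁻¹` has kernel spanned by `u = S 𝟏 = √d`. Because `L`
is symmetric with kernel `span 𝟏`, both `L L†` and `L† L` are the orthogonal projection onto `𝟏ᗮ`;
from this the four Penrose equations hold for `Q S L† S Q`, where `Q` is the orthogonal projection
onto `uᗮ`, so by uniqueness `𝓛† = (S Q)ᵀ L† (S Q)`. Finally `S Q eᵢ = √dᵢ (eᵢ - π)`.
-/

open Matrix

namespace Matrix

lemma dotProduct_transpose_mul_mul_mulVec {n R : Type*} [Fintype n] [CommSemiring R]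
    (B P : Matrix n n R) (x : n → R) :
    x ⬝ᵥ (Bᵀ * P * B) *ᵥ x = (B *ᵥ x) ⬝ᵥ P *ᵥ (B *ᵥ x) := by
  rw [← mulVec_mulVec, ← mulVec_mulVec, dotProduct_mulVec, vecMul_transpose]

variable {n K : Type*} [Fintype n] [DecidableEq n] [Field K]

def perpProj (v : n → K) : Matrix n n K := 1 - (v ⬝ᵥ v)⁻¹ • vecMulVec v v

lemma perpProj_transpose (v : n → K) : (perpProj v)ᵀ = perpProj v := by
  simp [perpProj]

lemma perpProj_mulVec (v x : n → K) :
    perpProj v *ᵥ x = x - ((v ⬝ᵥ x) / (v ⬝ᵥ v)) • v := by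
  rw [perpProj, sub_mulVec, one_mulVec, smul_mulVec, vecMulVec_mulVec, op_smul_eq_smul,
    smul_smul, inv_mul_eq_div]

lemma perpProj_mulVec_self {v : n → K} (hv : v ⬝ᵥ v ≠ 0) : perpProj v *ᵥ v = 0 := by
  rw [perpProj_mulVec, div_self hv, one_smul, sub_self]

lemma vecMul_perpProj_self {v : n → K} (hv : v ⬝ᵥ v ≠ 0) : v ᵥ* perpProj v = 0 := by
  rw [← mulVec_transpose, perpProj_transpose, perpProj_mulVec_self hv]

lemma perpProj_mul_of_vecMul_eq_zero {v : n → K} {M : Matrix n n K} (h : v ᵥ* M = 0) :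
    perpProj v * M = M := by
  rw [perpProj, sub_mul, one_mul, smul_mul_assoc, vecMulVec_mul, h, vecMulVec_zero, smul_zero,
    sub_zero]

lemma mul_perpProj_of_mulVec_eq_zero {v : n → K} {M : Matrix n n K} (h : M *ᵥ v = 0) :
    M * perpProj v = M := by
  rw [perpProj, mul_sub, mul_one, mul_smul_comm, mul_vecMulVec, h, zero_vecMulVec, smul_zero,
    sub_zero]

lemma perpProj_mul_self {v : n → K} (hv : v ⬝ᵥ v ≠ 0) : perpProj v * perpProj v = perpProj v :=
  perpProj_mul_of_vecMul_eq_zero (vecMul_perpProj_self hv)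

lemma eq_perpProj_of_mul_eq {v : n → K} {M X : Matrix n n K} (hv : v ⬝ᵥ v ≠ 0)
    (hMv : M *ᵥ v = 0) (hker : ∀ x, M *ᵥ x = 0 → ∃ c : K, x = c • v)
    (hMX : M * X = M) (hvX : v ᵥ* X = 0) : X = perpProj v := by
  set R := perpProj v - X
  have hMR : M * R = 0 := by rw [mul_sub, mul_perpProj_of_mulVec_eq_zero hMv, hMX, sub_self]
  have hvR : v ᵥ* R = 0 := by rw [vecMul_sub, vecMul_perpProj_self hv, hvX, sub_self]
  suffices hR : R = 0 from (sub_eq_zero.1 hR).symm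
  ext i j
  obtain ⟨c, hc⟩ := hker (R *ᵥ Pi.single j 1) (by rw [mulVec_mulVec, hMR, zero_mulVec])
  have hvc : v ⬝ᵥ (c • v) = 0 := by rw [← hc, dotProduct_mulVec, hvR, zero_dotProduct]
  have hc0 : c = 0 := by
    rw [dotProduct_smul, smul_eq_mul, mul_eq_zero] at hvc
    exact hvc.resolve_right hv
  simpa [hc0] using congrFun hc i

end Matrix

section MoorePenrose

variable {n : Type*} [Fintype n] [DecidableEq n]

lemma IsMoorePenrose.unique_s6 {M P₁ P₂ : Matrix n n ℝ}
    (h₁ : IsMoorePenrose M P₁) (h₂ : IsMoorePenrose M P₂) : P₁ = P₂ := by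
  obtain ⟨hMPM₁, hPMP₁, hMP₁, hPM₁⟩ := h₁
  obtain ⟨hMPM₂, hPMP₂, hMP₂, hPM₂⟩ := h₂
  have hMP_eq : M * P₁ = M * P₂ := by
    calc M * P₁ = (M * P₁)ᵀ := hMP₁.symm
    _ = ((M * P₂ * M) * P₁)ᵀ := by rw [hMPM₂]
    _ = (M * P₁)ᵀ * (M * P₂)ᵀ := by simp only [transpose_mul, mul_assoc]
    _ = (M * P₁) * (M * P₂) := by rw [hMP₁, hMP₂]
    _ = (M * P₁ * M) * P₂ := by simp only [mul_assoc]
    _ = M * P₂ := by rw [hMPM₁]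
  have hPM_eq : P₁ * M = P₂ * M := by
    calc P₁ * M = (P₁ * M)ᵀ := hPM₁.symm
    _ = (P₁ * (M * P₂ * M))ᵀ := by rw [hMPM₂]
    _ = (P₂ * M)ᵀ * (P₁ * M)ᵀ := by simp only [transpose_mul, mul_assoc]
    _ = (P₂ * M) * (P₁ * M) := by rw [hPM₁, hPM₂]
    _ = P₂ * (M * P₁ * M) := by simp only [mul_assoc]
    _ = P₂ * M := by rw [hMPM₁]
  calc P₁ = P₁ * M * P₁ := hPMP₁.symm
  _ = P₂ * M * P₁ := by rw [hPM_eq]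
  _ = P₂ * (M * P₂) := by rw [mul_assoc, hMP_eq]
  _ = P₂ := by rw [← mul_assoc, hPMP₂]

lemma IsMoorePenrose.of_mul_eq {M P Q : Matrix n n ℝ} (hMP : M * P = Q) (hPM : P * M = Q)
    (hQ : Qᵀ = Q) (hQM : Q * M = M) (hQP : Q * P = P) : IsMoorePenrose M P :=
  ⟨by rw [hMP, hQM], by rw [hPM, hQP], by rw [hMP, hQ], by rw [hPM, hQ]⟩

lemma IsMoorePenrose.mul_mul_pinv {M P : Matrix n n ℝ} (h : IsMoorePenrose M P) (hM : Mᵀ = M) :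
    M * (M * P) = M := by
  rw [← transpose_inj, transpose_mul, h.2.2.1, hM, h.1]

lemma IsMoorePenrose.mul_pinv_eq_perpProj {M P : Matrix n n ℝ} {v : n → ℝ}
    (h : IsMoorePenrose M P) (hM : Mᵀ = M) (hv : v ⬝ᵥ v ≠ 0) (hMv : M *ᵥ v = 0)
    (hker : ∀ x, M *ᵥ x = 0 → ∃ c : ℝ, x = c • v) : M * P = perpProj v :=
  eq_perpProj_of_mul_eq hv hMv hker (h.mul_mul_pinv hM) <| by
    rw [← vecMul_vecMul, ← hM, vecMul_transpose, hMv, zero_vecMul]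

lemma IsMoorePenrose.pinv_mul_eq_perpProj {M P : Matrix n n ℝ} {v : n → ℝ}
    (h : IsMoorePenrose M P) (hv : v ⬝ᵥ v ≠ 0) (hMv : M *ᵥ v = 0)
    (hker : ∀ x, M *ᵥ x = 0 → ∃ c : ℝ, x = c • v) : P * M = perpProj v :=
  eq_perpProj_of_mul_eq hv hMv hker (by rw [← mul_assoc, h.1]) <| by
    rw [← h.2.2.2, vecMul_transpose, ← mulVec_mulVec, hMv, mulVec_zero]

theorem isMoorePenrose_congr {M P S T : Matrix n n ℝ} {v : n → ℝ}
    (hMP : M * P = perpProj v) (hPM : P * M = perpProj v) (hMv : M *ᵥ v = 0)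
    (hvM : v ᵥ* M = 0) (hS : Sᵀ = S) (hST : S * T = 1) (hSv : (S *ᵥ v) ⬝ᵥ (S *ᵥ v) ≠ 0) :
    IsMoorePenrose (T * M * T) (perpProj (S *ᵥ v) * S * P * S * perpProj (S *ᵥ v)) := by
  have hTS : T * S = 1 := mul_eq_one_comm.1 hST
  set Q := perpProj (S *ᵥ v)
  have hSv' : S *ᵥ v = v ᵥ* S := by rw [← vecMul_transpose, hS]
  have hAQ : T * M * T * Q = T * M * T := mul_perpProj_of_mulVec_eq_zero <| by
    rw [← mulVec_mulVec, ← mulVec_mulVec, mulVec_mulVec v T S, hTS, one_mulVec, hMv, mulVec_zero]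
  have hQA : Q * (T * M * T) = T * M * T := perpProj_mul_of_vecMul_eq_zero <| by
    rw [hSv', vecMul_vecMul, ← mul_assoc, ← mul_assoc, hST, one_mul, ← vecMul_vecMul, hvM,
      zero_vecMul]
  have hPSQ : perpProj v * (S * Q) = S * Q := perpProj_mul_of_vecMul_eq_zero <| by
    rw [← vecMul_vecMul, ← hSv', vecMul_perpProj_self hSv]
  have hQSP : Q * S * perpProj v = Q * S := mul_perpProj_of_mulVec_eq_zero <| by
    rw [← mulVec_mulVec, perpProj_mulVec_self hSv]
  have hQQ : Q * Q = Q := perpProj_mul_self hSv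
  refine IsMoorePenrose.of_mul_eq (Q := Q) ?_ ?_ (perpProj_transpose _) hQA ?_
  · calc T * M * T * (Q * S * P * S * Q) = T * M * T * Q * S * P * (S * Q) := by
          simp only [mul_assoc]
    _ = T * M * (T * S) * P * (S * Q) := by rw [hAQ]; simp only [mul_assoc]
    _ = T * (perpProj v * (S * Q)) := by rw [hTS, mul_one, mul_assoc T M P, hMP, mul_assoc]
    _ = Q := by rw [hPSQ, ← mul_assoc, hTS, one_mul]
  · calc Q * S * P * S * Q * (T * M * T) = Q * S * P * S * (Q * (T * M * T)) := by
          simp only [mul_assoc]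
    _ = Q * S * P * (S * T) * M * T := by rw [hQA]; simp only [mul_assoc]
    _ = Q * S * perpProj v * T := by rw [hST, mul_one, mul_assoc (Q * S) P M, hPM]
    _ = Q := by rw [hQSP, mul_assoc, hST, mul_one]
  · simp only [← mul_assoc, hQQ]

end MoorePenrose

lemma sqrt_dotProduct_sqrt {n : Type*} [Fintype n] {d : n → ℝ} (hd : ∀ j, 0 ≤ d j) :
    (fun j => √(d j)) ⬝ᵥ (fun j => √(d j)) = ∑ j, d j :=
  Finset.sum_congr rfl fun j _ => Real.mul_self_sqrt (hd j)

lemma diagonal_sqrt_mulVec_perpProj_single {n : Type*} [Fintype n] [DecidableEq n] {d : n → ℝ}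
    (hd : ∀ j, 0 ≤ d j) (i : n) :
    diagonal (fun j => √(d j)) *ᵥ (perpProj (fun j => √(d j)) *ᵥ Pi.single i 1) =
      √(d i) • (Pi.single i 1 - fun j => d j / ∑ k, d k) := by
  have hdu : diagonal (fun j => √(d j)) *ᵥ (fun j => √(d j)) = d := by
    ext j; rw [mulVec_diagonal, Real.mul_self_sqrt (hd j)]
  rw [perpProj_mulVec, sqrt_dotProduct_sqrt hd, dotProduct_single, mul_one, mulVec_sub,
    mulVec_smul, diagonal_mulVec_single, mul_one, hdu]
  ext j
  simp only [Pi.sub_apply, Pi.smul_apply, smul_eq_mul, Pi.single_apply]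
  split_ifs <;> ring

theorem IsMoorePenrose.diagonal_inv_sqrt_congr {n : Type*} [Fintype n] [DecidableEq n]
    [Nonempty n] {L Lp : Matrix n n ℝ} {d : n → ℝ} (hLp : IsMoorePenrose L Lp) (hLT : Lᵀ = L)
    (hL1 : L *ᵥ (fun _ => 1) = 0) (hker : ∀ x, L *ᵥ x = 0 → ∃ c : ℝ, x = c • fun _ => 1)
    (hd : ∀ j, 0 < d j) :
    IsMoorePenrose (diagonal (fun j => (√(d j))⁻¹) * L * diagonal (fun j => (√(d j))⁻¹))
      ((diagonal (fun j => √(d j)) * perpProj fun j => √(d j))ᵀ * Lp *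
        (diagonal (fun j => √(d j)) * perpProj fun j => √(d j))) := by
  have hone : (fun _ => 1 : n → ℝ) ⬝ᵥ (fun _ => 1) ≠ 0 := by
    simp [dotProduct, Fintype.card_ne_zero]
  have hST : diagonal (fun j => √(d j)) * diagonal (fun j => (√(d j))⁻¹) = 1 := by
    rw [diagonal_mul_diagonal, ← diagonal_one]
    exact congrArg diagonal (funext fun j => mul_inv_cancel₀ (Real.sqrt_pos.2 (hd j)).ne')
  have hS1 : diagonal (fun j => √(d j)) *ᵥ (fun _ => 1) = fun j => √(d j) := by
    ext; simp [mulVec_diagonal]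
  have hu : (fun j => √(d j)) ⬝ᵥ (fun j => √(d j)) ≠ 0 := by
    rw [sqrt_dotProduct_sqrt fun j => (hd j).le]
    exact (Finset.sum_pos (fun j _ => hd j) Finset.univ_nonempty).ne'
  have h := isMoorePenrose_congr (hLp.mul_pinv_eq_perpProj hLT hone hL1 hker)
    (hLp.pinv_mul_eq_perpProj hone hL1 hker) hL1 (by rw [← hLT, vecMul_transpose, hL1])
    (diagonal_transpose _) hST (by rwa [hS1])
  rw [hS1] at h
  convert h using 1
  rw [transpose_mul, perpProj_transpose, diagonal_transpose]
  simp only [mul_assoc]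

theorem stmt6_general (N : ℕ)
    (L : Matrix (Fin N) (Fin N) ℝ) (hPSD : L.PosSemidef)
    (hker : ∀ v : Fin N → ℝ, L.mulVec v = 0 ↔ ∃ c : ℝ, v = fun _ => c)
    (hL1 : L.mulVec (fun _ => 1) = 0)
    (d : Fin N → ℝ) (hdpos : ∀ i, 0 < d i)
    (dsum : ℝ) (hdsum : dsum = ∑ i, d i)
    (pv : Fin N → ℝ) (hpv : ∀ i, pv i = d i / dsum)
    (Lp Np : Matrix (Fin N) (Fin N) ℝ)
    (hLp : IsMoorePenrose L Lp)
    (hNp : IsMoorePenrose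
        (Matrix.diagonal (fun i => (Real.sqrt (d i))⁻¹) * L *
          Matrix.diagonal (fun i => (Real.sqrt (d i))⁻¹)) Np)
    (i : Fin N) :
    Pi.single i 1 ⬝ᵥ Np.mulVec (Pi.single i 1) =
      d i * ((Pi.single i 1 - pv) ⬝ᵥ Lp.mulVec (Pi.single i 1 - pv)) := by
  have : Nonempty (Fin N) := ⟨i⟩
  have hLT : Lᵀ = L := by simpa using hPSD.isHermitian.eq
  have hkerL : ∀ x, L *ᵥ x = 0 → ∃ c : ℝ, x = c • fun _ => 1 := fun x hx => by
    obtain ⟨c, rfl⟩ := (hker x).1 hx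
    exact ⟨c, by ext; simp⟩
  have hpv' : pv = fun j => d j / ∑ k, d k := funext fun j => by rw [hpv, hdsum]
  rw [hNp.unique_s6 (hLp.diagonal_inv_sqrt_congr hLT hL1 hkerL hdpos),
    dotProduct_transpose_mul_mul_mulVec, ← mulVec_mulVec,
    diagonal_sqrt_mulVec_perpProj_single (fun j => (hdpos j).le), hpv', mulVec_smul,
    smul_dotProduct, dotProduct_smul, smul_eq_mul, smul_eq_mul, ← mul_assoc,
    Real.mul_self_sqrt (hdpos i).le]

/-- with `L`, `D`, `𝓛 = D^{-1/2} L D^{-1/2}` and `π_i = d_i/d_sum`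
as below, every diagonal entry of `𝓛†` satisfies
`e_iᵀ 𝓛† e_i = d_i (e_i − π)ᵀ L† (e_i − π)`. -/
theorem stmt6 (N : ℕ) (hN : 2 ≤ N)
    (L : Matrix (Fin N) (Fin N) ℝ) (hPSD : L.PosSemidef)
    (hker : ∀ v : Fin N → ℝ, L.mulVec v = 0 ↔ ∃ c : ℝ, v = fun _ => c)
    (hL1 : L.mulVec (fun _ => 1) = 0)
    (d : Fin N → ℝ) (hdpos : ∀ i, 0 < d i)
    (dsum : ℝ) (hdsum : dsum = ∑ i, d i)
    (pv : Fin N → ℝ) (hpv : ∀ i, pv i = d i / dsum)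
    (Lp Np : Matrix (Fin N) (Fin N) ℝ)
    (hLp : IsMoorePenrose L Lp)
    (hNp : IsMoorePenrose
        (Matrix.diagonal (fun i => (Real.sqrt (d i))⁻¹) * L *
          Matrix.diagonal (fun i => (Real.sqrt (d i))⁻¹)) Np)
    (i : Fin N) :
    Pi.single i 1 ⬝ᵥ Np.mulVec (Pi.single i 1) =
      d i * ((Pi.single i 1 - pv) ⬝ᵥ Lp.mulVec (Pi.single i 1 - pv)) :=
  stmt6_general N L hPSD hker hL1 d hdpos dsum hdsum pv hpv Lp Np hLp hNp i
end

section
/- Let (F_g)_{g≥0} be the pseudofractal scale-free web defined below, let P_g be its transition matrix, and let λ₂,…,λ_{N_g} be the eigenvalues of P_g other than the simple eigenvalue 1 (counted with multiplicity), where N_g is the number of nodes of F_g. Then for every g ≥ 2, the Kemeny constant of the two-step chain, K(F'_g) = Σ_{k=2}^{N_g} 1/(1 − λ_k²), satisfies the closed-form identity K(F'_g) = Σ_{s=0}^{g} 2^{2s+1}·(3^{g−s−1} + 1)/(2^{s+2} − 3) + Σ_{s=0}^{g−2} 2^{2s−1}·(3^{g−s} − 3)/(2^{s+1} − 1), where 3^{g−s−1}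 is interpreted as the real power (so 3^{−1} = 1/3 when s = g). -/
open SimpleGraph

def extendGraph {V : Type} (G : SimpleGraph V) : SimpleGraph (V ⊕ G.edgeSet) where
  Adj x y :=
    match x, y with
    | Sum.inl u, Sum.inl v => G.Adj u v
    | Sum.inl u, Sum.inr e => u ∈ (e : Sym2 V)
    | Sum.inr e, Sum.inl u => u ∈ (e : Sym2 V)
    | Sum.inr _, Sum.inr _ => False
  symm := by
    constructor
    rintro (u | e) (v | f) h
    · exact G.adj_symm h
    · exact h
    · exact h
    · exact h.elim
  loopless := by
    constructor
    rintro (u | e) h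
    · exact G.irrefl h
    · exact h

def extendDec {V : Type} [DecidableEq V] (G : SimpleGraph V) [DecidableRel G.Adj] :
    DecidableRel (extendGraph G).Adj := fun x y =>
  match x, y with
  | Sum.inl u, Sum.inl v => inferInstanceAs (Decidable (G.Adj u v))
  | Sum.inl u, Sum.inr e => inferInstanceAs (Decidable (u ∈ (e : Sym2 V)))
  | Sum.inr e, Sum.inl u => inferInstanceAs (Decidable (u ∈ (e : Sym2 V)))
  | Sum.inr _, Sum.inr _ => inferInstanceAs (Decidable False)

structure GB where
  V : Type
  fin : Fintype V
  deq : DecidableEq V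
  G : SimpleGraph V
  dec : DecidableRel G.Adj

def extendGB (X : GB) : GB :=
  letI := X.fin
  letI := X.deq
  letI := X.dec
  { V := X.V ⊕ X.G.edgeSet
    fin := inferInstance
    deq := inferInstance
    G := extendGraph X.G
    dec := extendDec X.G }

def PGB : ℕ → GB
  | 0 =>
    { V := Fin 3
      fin := inferInstance
      deq := inferInstance
      G := ⊤
      dec := inferInstance }
  | g + 1 => extendGB (PGB g)

noncomputable def transMat (X : GB) : Matrix X.V X.V ℝ :=
  letI := X.fin
  letI := X.deq
  letI := X.dec
  Matrix.of fun u v => (if X.G.Adj u v then (1 : ℝ) else 0) / (X.G.degree u : ℝ)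

noncomputable def transCharRoots (X : GB) : Multiset ℝ :=
  letI := X.fin
  letI := X.deq
  (transMat X).charpoly.roots

/-!
Let `P` be the transition matrix of a graph with `N` vertices, `E` edges and no isolated vertex,
and `P'` that of the graph obtained by attaching a new vertex to every edge. In `xI - P'` the block
indexed by the new vertices is the scalar `x`, and its Schur complement is
`((2x + 1) / (4x)) • ((2x - 1)I - P)`, because the incidence matrix `M` satisfies
`M Mᵀ = D + A`. Hence `(4x)^N det(xI - P') = x^E (2x + 1)^N det((2x - 1)I - P)`: the spectrum of
`P'` consists of `E - N` zeros, `N` copies of `-1/2` and the images `(λ + 1)/2` of the eigenvalues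
`λ` of `P`. Starting from the triangle's spectrum `{1, -1/2, -1/2}`, the eigenvalues of `P_g`
other than `1` are the `s`-th iterates of `-1/2` and of `0` under `λ ↦ (λ + 1)/2`, with
multiplicities `(3^(g-s) + 3)/2` and `(3^(g-s) - 3)/2`, and summing `1 / (1 - λ²)` over these
families gives the closed form.
-/

open Finset

namespace SimpleGraph

open Matrix

variable {V : Type} (G : SimpleGraph V)

@[simp] lemma extendGraph_adj_inl_inl {u v : V} :
    (extendGraph G).Adj (Sum.inl u) (Sum.inl v) ↔ G.Adj u v := Iff.rfl

@[simp] lemma extendGraph_adj_inl_inr {u : V} {e : G.edgeSet} :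
    (extendGraph G).Adj (Sum.inl u) (Sum.inr e) ↔ u ∈ (e : Sym2 V) := Iff.rfl

@[simp] lemma extendGraph_adj_inr_inl {e : G.edgeSet} {u : V} :
    (extendGraph G).Adj (Sum.inr e) (Sum.inl u) ↔ u ∈ (e : Sym2 V) := Iff.rfl

@[simp] lemma extendGraph_not_adj_inr_inr {e f : G.edgeSet} :
    ¬(extendGraph G).Adj (Sum.inr e) (Sum.inr f) := id

lemma incMatrix_apply_edgeSet [DecidableEq V] [DecidableRel G.Adj] {R : Type*} [Zero R] [One R]
    (u : V) (e : G.edgeSet) : G.incMatrix R u e = if u ∈ (e : Sym2 V) then 1 else 0 := by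
  simp [incMatrix_apply', incidenceSet, e.2]

variable [DecidableRel G.Adj] [Fintype V]

noncomputable def transitionMatrix : Matrix V V ℝ :=
  of fun u v => G.adjMatrix ℝ u v / G.degree u

lemma sum_edgeSet_eq_sum_of_notMem {M : Type*} [AddCommMonoid M] {f : Sym2 V → M}
    (hf : ∀ e ∉ G.edgeSet, f e = 0) : ∑ e : G.edgeSet, f e = ∑ e, f e := by
  rw [sum_set_coe]
  exact sum_subset (subset_univ _) fun e _ he => hf e (by simpa using he)

variable [DecidableEq V]

instance : DecidableRel (extendGraph G).Adj := extendDec G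

lemma sum_edgeSet_incMatrix {R : Type*} [NonAssocSemiring R] (u : V) :
    ∑ e : G.edgeSet, G.incMatrix R u e = G.degree u := by
  rw [G.sum_edgeSet_eq_sum_of_notMem fun e he =>
    G.incMatrix_of_notMem_incidenceSet fun h => he h.1, sum_incMatrix_apply]

lemma sum_edgeSet_incMatrix_mul {R : Type*} [Semiring R] (u v : V) :
    ∑ e : G.edgeSet, G.incMatrix R u e * G.incMatrix R v e =
      if u = v then (G.degree u : R) else if G.Adj u v then 1 else 0 := by
  rw [G.sum_edgeSet_eq_sum_of_notMem (f := fun e => G.incMatrix R u e * G.incMatrix R v e)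
    fun e he => by rw [G.incMatrix_of_notMem_incidenceSet fun h => he h.1, zero_mul]]
  simpa [mul_apply] using congrFun (congrFun (G.incMatrix_mul_transpose (R := R)) u) v

lemma degree_extendGraph_inl (u : V) :
    (extendGraph G).degree (Sum.inl u) = 2 * G.degree u := by
  have h := (extendGraph G).degree_eq_sum_if_adj (R := ℕ) (Sum.inl u)
  rw [Fintype.sum_sum_type] at h
  change _ = ∑ v, (if G.Adj u v then 1 else 0) +
    ∑ e : G.edgeSet, (if u ∈ (e : Sym2 V) then 1 else 0) at h
  rw [← degree_eq_sum_if_adj] at h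
  simp only [← incMatrix_apply_edgeSet, sum_edgeSet_incMatrix, Nat.cast_id] at h
  rw [h, two_mul]

lemma degree_extendGraph_inr (e : G.edgeSet) : (extendGraph G).degree (Sum.inr e) = 2 := by
  have h := (extendGraph G).degree_eq_sum_if_adj (R := ℕ) (Sum.inr e)
  rw [Fintype.sum_sum_type] at h
  change _ = ∑ v, (if v ∈ (e : Sym2 V) then 1 else 0) +
    ∑ f : G.edgeSet, (if False then 1 else 0) at h
  simpa [← incMatrix_apply_edgeSet, sum_incMatrix_apply_of_mem_edgeSet _ e.2] using h

lemma degree_extendGraph_pos (hG : ∀ u, 0 < G.degree u) (x : V ⊕ G.edgeSet) :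
    0 < (extendGraph G).degree x := by
  rcases x with u | e
  · simpa [degree_extendGraph_inl] using hG u
  · simp [degree_extendGraph_inr]

lemma card_edgeSet_extendGraph :
    Fintype.card (extendGraph G).edgeSet = 3 * Fintype.card G.edgeSet := by
  have h := (extendGraph G).sum_degrees_eq_twice_card_edges
  rw [Fintype.sum_sum_type] at h
  simp only [degree_extendGraph_inl, degree_extendGraph_inr, ← mul_sum,
    sum_degrees_eq_twice_card_edges, sum_const, card_univ, smul_eq_mul, edgeFinset_card] at h
  omega

lemma transitionMatrix_extendGraph :
    transitionMatrix (extendGraph G) =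
      fromBlocks ((2⁻¹ : ℝ) • transitionMatrix G)
        (of fun u (e : G.edgeSet) => G.incMatrix ℝ u e / (2 * G.degree u))
        (of fun (e : G.edgeSet) u => G.incMatrix ℝ u e / 2) 0 := by
  ext (u | e) (v | f) <;>
    simp [transitionMatrix, degree_extendGraph_inl, degree_extendGraph_inr, incMatrix_apply_edgeSet,
      div_mul_eq_div_div_swap, inv_mul_eq_div]

lemma transitionMatrix_extendGraph_offDiagonal_mul (hG : ∀ u, 0 < G.degree u) :
    (of fun u (e : G.edgeSet) => G.incMatrix ℝ u e / (2 * G.degree u)) *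
        (of fun (e : G.edgeSet) u => G.incMatrix ℝ u e / 2) =
      (4⁻¹ : ℝ) • (1 + transitionMatrix G) := by
  ext u v
  have hu : (G.degree u : ℝ) ≠ 0 := by exact_mod_cast (hG u).ne'
  simp only [mul_apply, of_apply, div_mul_div_comm, ← sum_div, sum_edgeSet_incMatrix_mul]
  by_cases huv : u = v
  · subst huv
    simp only [if_true, Matrix.smul_apply, Matrix.add_apply, one_apply_eq, transitionMatrix, of_apply,
      adjMatrix_apply, SimpleGraph.irrefl, if_false, zero_div, add_zero, smul_eq_mul]
    field_simp
    ring
  · simp only [huv, if_false, Matrix.smul_apply, Matrix.add_apply, one_apply_ne huv, transitionMatrix, of_apply,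
      adjMatrix_apply, zero_add, smul_eq_mul]
    split_ifs <;> field_simp <;> ring

lemma det_scalar_sub_transitionMatrix_extendGraph (hG : ∀ u, 0 < G.degree u) {x : ℝ}
    (hx : x ≠ 0) :
    (4 * x) ^ Fintype.card V * (scalar _ x - transitionMatrix (extendGraph G)).det =
      x ^ Fintype.card G.edgeSet * (2 * x + 1) ^ Fintype.card V *
        (scalar _ (2 * x - 1) - transitionMatrix G).det := by
  let := invertibleOfNonzero hx
  let := Invertible.map (scalar G.edgeSet) x
  set B : Matrix V G.edgeSet ℝ := of fun u e => G.incMatrix ℝ u e / (2 * G.degree u)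
  set C : Matrix G.edgeSet V ℝ := of fun e u => G.incMatrix ℝ u e / 2
  have hBC : B * C = (4⁻¹ : ℝ) • (1 + transitionMatrix G) :=
    transitionMatrix_extendGraph_offDiagonal_mul G hG
  have hblock : scalar _ x - transitionMatrix (extendGraph G) =
      fromBlocks (scalar V x - (2⁻¹ : ℝ) • transitionMatrix G) (-B) (-C) (scalar G.edgeSet x) := by
    rw [transitionMatrix_extendGraph]
    ext (i | i) (j | j) <;> simp [B, C, scalar_apply, diagonal_apply]
  have hschur : scalar V x - (2⁻¹ : ℝ) • transitionMatrix G - (-B) * ⅟(scalar G.edgeSet x) * (-C) =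
      ((2 * x + 1) / (4 * x)) • (scalar V (2 * x - 1) - transitionMatrix G) := by
    rw [← map_invOf, invOf_eq_inv]
    simp only [scalar_apply, ← smul_one_eq_diagonal, Matrix.neg_mul, Matrix.mul_neg, neg_neg,
      Matrix.smul_mul, Matrix.mul_smul, Matrix.mul_one, smul_neg, hBC]
    match_scalars <;> field_simp <;> ring
  rw [hblock, det_fromBlocks₂₂, hschur, det_smul, scalar_apply, det_diagonal, prod_const,
    card_univ, div_pow]
  field_simp

open Polynomial in
theorem charpoly_transitionMatrix_extendGraph (hG : ∀ u, 0 < G.degree u) :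
    (C 4 * X) ^ Fintype.card V * (transitionMatrix (extendGraph G)).charpoly =
      X ^ Fintype.card G.edgeSet * (C 2 * X + 1) ^ Fintype.card V *
        (transitionMatrix G).charpoly.comp (C 2 * X - 1) := by
  refine eq_of_infinite_eval_eq _ _
    ((Set.finite_singleton (0 : ℝ)).infinite_compl.mono fun x (hx : x ≠ 0) => ?_)
  simp only [eval_mul, eval_pow, eval_comp, eval_add, eval_sub, eval_one, eval_C, eval_X,
    eval_charpoly]
  exact G.det_scalar_sub_transitionMatrix_extendGraph hG hx

end SimpleGraph

open Polynomial

noncomputable def halfShift (a : ℝ) : ℝ := (a + 1) / 2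

lemma halfShift_iterate (s : ℕ) (a : ℝ) : halfShift^[s] a = 1 - (1 - a) / 2 ^ s := by
  induction s with
  | zero => simp
  | succ s ih =>
    rw [Function.iterate_succ_apply', ih, halfShift, pow_succ]
    field_simp
    ring

lemma X_sub_C_comp_two_mul_X_sub_one (a : ℝ) :
    (X - C a).comp (C 2 * X - 1) = C 2 * (X - C (halfShift a)) := by
  simp only [sub_comp, X_comp, C_comp, mul_sub, ← C_mul, halfShift]
  rw [mul_div_cancel₀ _ two_ne_zero, C_add, C_1]
  ring

lemma eq_prod_X_sub_C_of_mul_eq {p q : ℝ[X]} {m : Multiset ℝ} {N M : ℕ}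
    (hm : Multiset.card m = N) (hq : q = (m.map fun a => X - C a).prod)
    (h : (C 4 * X) ^ N * p = X ^ (N + M) * (C 2 * X + 1) ^ N * q.comp (C 2 * X - 1)) :
    p = ((Multiset.replicate M 0 + Multiset.replicate N (-2⁻¹) + m.map halfShift).map
      fun a => X - C a).prod := by
  have hcomp : q.comp (C 2 * X - 1) = C 2 ^ N * (m.map fun a => X - C (halfShift a)).prod := by
    rw [hq, multiset_prod_comp, Multiset.map_map]
    simp only [Function.comp_def, X_sub_C_comp_two_mul_X_sub_one, Multiset.prod_map_mul,
      Multiset.map_const', Multiset.prod_replicate, hm]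
  have hlin : C 2 * X + 1 = C 2 * (X - C (-2⁻¹) : ℝ[X]) := by
    rw [mul_sub, ← C_mul]
    norm_num
  have h4 : (C 4 * X : ℝ[X]) ^ N ≠ 0 :=
    pow_ne_zero _ (mul_ne_zero (C_ne_zero.2 four_ne_zero) X_ne_zero)
  refine mul_left_cancel₀ h4 ?_
  rw [h, hcomp, hlin, mul_pow, Multiset.map_add, Multiset.map_add, Multiset.prod_add,
    Multiset.prod_add, Multiset.map_replicate, Multiset.map_replicate, Multiset.prod_replicate,
    Multiset.prod_replicate, Multiset.map_map, C_0, sub_zero,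
    show (C 4 : ℝ[X]) = C 2 * C 2 by rw [← C_mul]; norm_num]
  simp only [Function.comp_def]
  ring

def multNegHalf (t : ℕ) : ℕ := (3 ^ t + 3) / 2

def multZero (t : ℕ) : ℕ := (3 ^ t - 3) / 2

lemma two_mul_multNegHalf (t : ℕ) : 2 * multNegHalf t = 3 ^ t + 3 := by
  obtain ⟨k, hk⟩ := Odd.pow (n := t) (by decide : Odd 3)
  rw [multNegHalf, hk]
  omega

lemma two_mul_multZero_add_three {t : ℕ} (ht : 1 ≤ t) : 2 * multZero t + 3 = 3 ^ t := by
  obtain ⟨k, hk⟩ := Odd.pow (n := t) (by decide : Odd 3)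
  have : 3 ≤ 3 ^ t := Nat.le_self_pow (by omega) 3
  rw [multZero]
  omega

/-- The summand `s` collects the eigenvalues created as `-1/2`, resp. `0`, at generation `g - s`
and moved `s` times by `halfShift` since. -/
noncomputable def pfEigenvalues (g : ℕ) : Multiset ℝ :=
  ∑ s ∈ range (g + 1), Multiset.replicate (multNegHalf (g - s)) (halfShift^[s] (-2⁻¹)) +
    ∑ s ∈ range g, Multiset.replicate (multZero (g - s)) (halfShift^[s] 0)

lemma map_halfShift_sum_replicate (n : ℕ) (k : ℕ → ℕ) (a : ℝ) :
    (∑ s ∈ range n, Multiset.replicate (k s) (halfShift^[s] a)).map halfShift =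
      ∑ s ∈ range n, Multiset.replicate (k s) (halfShift^[s + 1] a) := by
  rw [← Multiset.coe_mapAddMonoidHom, map_sum]
  simp [Multiset.map_replicate, Function.iterate_succ_apply']

lemma cons_one_pfEigenvalues_succ (g : ℕ) :
    1 ::ₘ pfEigenvalues (g + 1) =
      Multiset.replicate (multZero (g + 1)) 0 + Multiset.replicate (multNegHalf (g + 1)) (-2⁻¹) +
        (1 ::ₘ pfEigenvalues g).map halfShift := by
  rw [Multiset.map_cons, show halfShift 1 = 1 by norm_num [halfShift], pfEigenvalues,
    pfEigenvalues, Multiset.map_add, map_halfShift_sum_replicate, map_halfShift_sum_replicate,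
    sum_range_succ' (fun s => Multiset.replicate (multNegHalf (g + 1 - s)) (halfShift^[s] (-2⁻¹))),
    sum_range_succ' (fun s => Multiset.replicate (multZero (g + 1 - s)) (halfShift^[s] 0))]
  simp only [Nat.add_sub_add_right, Nat.sub_zero, Function.iterate_zero_apply]
  rw [← Multiset.singleton_add, ← Multiset.singleton_add]
  abel

-- Statements about `PGB g` then use the instances bundled in `GB`, as `transMat` does.
attribute [local instance] GB.fin GB.deq GB.dec

lemma degree_PGB_pos : ∀ g (u : (PGB g).V), 0 < (PGB g).G.degree u
  | 0 => by decide
  | g + 1 => SimpleGraph.degree_extendGraph_pos (PGB g).G (degree_PGB_pos g)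

lemma card_PGB_edgeSet : ∀ g, Fintype.card (PGB g).G.edgeSet = 3 ^ (g + 1)
  | 0 => by decide
  | g + 1 => by
    rw [pow_succ', ← card_PGB_edgeSet g]
    exact SimpleGraph.card_edgeSet_extendGraph (PGB g).G

lemma card_PGB_V : ∀ g, Fintype.card (PGB g).V = multNegHalf (g + 1)
  | 0 => rfl
  | g + 1 => by
    have h : Fintype.card (PGB (g + 1)).V =
        Fintype.card (PGB g).V + Fintype.card (PGB g).G.edgeSet :=
      Fintype.card_sum
    rw [h, card_PGB_V g, card_PGB_edgeSet, multNegHalf, multNegHalf, pow_succ _ (g + 1)]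
    omega

lemma charpoly_transMat_PGB_zero :
    (transMat (PGB 0)).charpoly = (X - C 1) * (X - C (-2⁻¹)) ^ 2 := by
  change ((⊤ : SimpleGraph (Fin 3)).transitionMatrix).charpoly = _
  refine Polynomial.funext fun x => ?_
  rw [Matrix.eval_charpoly, Matrix.det_fin_three]
  simp only [Matrix.scalar_apply, SimpleGraph.transitionMatrix, adjMatrix_apply, top_adj, ne_eq,
    ite_not, complete_graph_degree, Fintype.card_fin, Nat.add_one_sub_one, Nat.cast_ofNat,
    Matrix.sub_apply, Matrix.diagonal_apply_eq, Matrix.diagonal_apply_ne, Matrix.of_apply,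
    ↓reduceIte, Fin.reduceEq, not_false_eq_true, zero_div, sub_zero, zero_sub, eval_mul, eval_sub,
    eval_X, eval_pow, eval_C]
  ring

theorem charpoly_transMat_PGB (g : ℕ) :
    (transMat (PGB g)).charpoly = ((1 ::ₘ pfEigenvalues g).map fun a => X - C a).prod := by
  induction g with
  | zero =>
    rw [charpoly_transMat_PGB_zero]
    simp [pfEigenvalues, multNegHalf, sq]
  | succ g ih =>
    have hcard : Multiset.card (1 ::ₘ pfEigenvalues g) = Fintype.card (PGB g).V := by
      rw [← natDegree_multiset_prod_X_sub_C_eq_card, ← ih, Matrix.charpoly_natDegree_eq_dim]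
    have hE : Fintype.card (PGB g).G.edgeSet = Fintype.card (PGB g).V + multZero (g + 1) := by
      have := two_mul_multNegHalf (g + 1)
      have := two_mul_multZero_add_three (t := g + 1) (by omega)
      rw [card_PGB_edgeSet, card_PGB_V]
      omega
    have h := SimpleGraph.charpoly_transitionMatrix_extendGraph (PGB g).G (degree_PGB_pos g)
    rw [hE] at h
    rw [cons_one_pfEigenvalues_succ, ← card_PGB_V]
    exact eq_prod_X_sub_C_of_mul_eq hcard ih h

lemma transCharRoots_PGB (g : ℕ) : transCharRoots (PGB g) = 1 ::ₘ pfEigenvalues g := by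
  rw [transCharRoots, charpoly_transMat_PGB, roots_multiset_prod_X_sub_C]

lemma multNegHalf_mul_inv_one_sub_sq (g s : ℕ) (hs : s ≤ g) :
    (multNegHalf (g - s) : ℝ) * (1 / (1 - (halfShift^[s] (-2⁻¹)) ^ 2)) =
      2 ^ (2 * s + 1) * ((3 : ℝ) ^ ((g : ℤ) - s - 1) + 1) / (2 ^ (s + 2) - 3) := by
  have hmult : (multNegHalf (g - s) : ℝ) = (3 ^ (g - s) + 3) / 2 := by
    rw [eq_div_iff two_ne_zero, mul_comm]
    exact_mod_cast two_mul_multNegHalf (g - s)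
  have hpow : (3 : ℝ) ^ ((g : ℤ) - s - 1) = 3 ^ (g - s) / 3 := by
    rw [show (g : ℤ) - s - 1 = ((g - s : ℕ) : ℤ) - 1 by push_cast [hs]; ring,
      zpow_sub₀ three_ne_zero, zpow_natCast, zpow_one]
  have hu : (1 : ℝ) ≤ 2 ^ s := one_le_pow₀ one_le_two
  have hden : 1 - (1 - (1 - -2⁻¹) / 2 ^ s) ^ 2 = 3 * (4 * 2 ^ s - 3) / (4 * (2 ^ s) ^ 2 : ℝ) := by
    field_simp
    ring
  have h4 : (4 * 2 ^ s - 3 : ℝ) ≠ 0 := by linarith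
  rw [hmult, hpow, halfShift_iterate, hden, show (2 : ℝ) ^ (2 * s + 1) = 2 * (2 ^ s) ^ 2 by ring,
    show (2 : ℝ) ^ (s + 2) = 4 * 2 ^ s by ring]
  field_simp
  ring

lemma multZero_mul_inv_one_sub_sq (g s : ℕ) (hs : s < g) :
    (multZero (g - s) : ℝ) * (1 / (1 - (halfShift^[s] 0) ^ 2)) =
      2 ^ (2 * (s : ℤ) - 1) * ((3 : ℝ) ^ ((g : ℤ) - s) - 3) / (2 ^ (s + 1) - 1) := by
  have hmult : (multZero (g - s) : ℝ) = (3 ^ (g - s) - 3) / 2 := by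
    rw [eq_div_iff two_ne_zero, eq_sub_iff_add_eq, mul_comm]
    exact_mod_cast two_mul_multZero_add_three (t := g - s) (by omega)
  have hpow3 : (3 : ℝ) ^ ((g : ℤ) - s) = 3 ^ (g - s) := by
    rw [show (g : ℤ) - s = ((g - s : ℕ) : ℤ) by push_cast [hs.le]; ring, zpow_natCast]
  have hpow2 : (2 : ℝ) ^ (2 * (s : ℤ) - 1) = (2 ^ s) ^ 2 / 2 := by
    rw [show 2 * (s : ℤ) - 1 = ((2 * s : ℕ) : ℤ) - 1 by push_cast; ring,
      zpow_sub₀ two_ne_zero, zpow_natCast, zpow_one, pow_mul']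
  have hu : (1 : ℝ) ≤ 2 ^ s := one_le_pow₀ one_le_two
  have hden : 1 - (1 - (1 - 0) / 2 ^ s) ^ 2 = (2 * 2 ^ s - 1) / ((2 ^ s) ^ 2 : ℝ) := by
    field_simp
    ring
  have h2 : (2 * 2 ^ s - 1 : ℝ) ≠ 0 := by linarith
  rw [hmult, hpow3, hpow2, halfShift_iterate, hden, show (2 : ℝ) ^ (s + 1) = 2 * 2 ^ s by ring]
  field_simp

lemma sum_map_sum_replicate {ι α R : Type*} [NonAssocSemiring R] (f : α → R) (s : Finset ι)
    (k : ι → ℕ) (a : ι → α) :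
    ((∑ i ∈ s, Multiset.replicate (k i) (a i)).map f).sum = ∑ i ∈ s, k i * f (a i) := by
  rw [← Multiset.coe_mapAddMonoidHom, map_sum, Multiset.sum_sum]
  simp [Multiset.map_replicate, Multiset.sum_replicate]

theorem stmt13_general (g : ℕ) :
    (((transCharRoots (PGB g)).erase 1).map (fun l => 1 / (1 - l ^ 2))).sum =
      ∑ s ∈ Finset.range (g + 1),
        (2 : ℝ) ^ (2 * s + 1) * ((3 : ℝ) ^ ((g : ℤ) - s - 1) + 1) /
          (2 ^ (s + 2) - 3)
      + ∑ s ∈ Finset.range (g - 1),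
        (2 : ℝ) ^ (2 * (s : ℤ) - 1) * ((3 : ℝ) ^ ((g : ℤ) - s) - 3) /
          (2 ^ (s + 1) - 1) := by
  rw [transCharRoots_PGB, Multiset.erase_cons_head, pfEigenvalues, Multiset.map_add,
    Multiset.sum_add, sum_map_sum_replicate, sum_map_sum_replicate]
  congr 1
  · exact sum_congr rfl fun s hs =>
      multNegHalf_mul_inv_one_sub_sq g s (Nat.lt_succ_iff.mp (mem_range.mp hs))
  · rcases g with _ | g
    · rfl
    rw [sum_range_succ, Nat.add_sub_cancel_left, show multZero 1 = 0 from rfl, Nat.cast_zero,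
      zero_mul, add_zero, Nat.add_sub_cancel]
    exact sum_congr rfl fun s hs =>
      multZero_mul_inv_one_sub_sq (g + 1) s (Nat.lt_succ_of_lt (mem_range.mp hs))

/-- for `g ≥ 2`, the Kemeny constant of the two-step chain on the
pseudofractal scale-free web, `K(F'_g) = Σ_{k=2}^{N_g} 1/(1 − λ_k²)` (where
`λ₂,…,λ_{N_g}` are the eigenvalues of `P_g` other than the simple eigenvalue
`1`), has the closed form
`Σ_{s=0}^{g} 2^{2s+1}(3^{g−s−1}+1)/(2^{s+2}−3)
 + Σ_{s=0}^{g−2} 2^{2s−1}(3^{g−s}−3)/(2^{s+1}−1)`. -/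
theorem stmt13 (g : ℕ) (hg : 2 ≤ g) :
    (((transCharRoots (PGB g)).erase 1).map (fun l => 1 / (1 - l ^ 2))).sum =
      ∑ s ∈ Finset.range (g + 1),
        (2 : ℝ) ^ (2 * s + 1) * ((3 : ℝ) ^ ((g : ℤ) - s - 1) + 1) /
          (2 ^ (s + 2) - 3)
      + ∑ s ∈ Finset.range (g - 1),
        (2 : ℝ) ^ (2 * (s : ℤ) - 1) * ((3 : ℝ) ^ ((g : ℤ) - s) - 3) /
          (2 ^ (s + 1) - 1) :=
  stmt13_general g
end
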